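/- arXiv:2001.08074 — 3 statements merged into one kernel-verified Lean document; each statement's English description precedes it below -/
import Mathlib

section
/- In the 3-regular tree, every finite nonempty set of vertices V satisfies #∂V ≥ #V, where ∂V denotes the vertex boundary of V, i.e., the set of vertices outside V adjacent to at least one vertex of V. -/
/-!
Root the tree at a vertex `r` of `S` and let `v ∈ S` be farthest from `r`. Every vertex other than
`r` has exactly one neighbour closer to `r`, so `v` has at least two children; they lie outside `S`
and `v` is their only neighbour in `S`. Removing `v` from `S` therefore loses these two boundary
vertices and gains at most `v` itself, so by induction `#∂S ≥ #S + 2`, with equality for a single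
vertex.
-/

open Set

namespace SimpleGraph

variable {V : Type*} {G : SimpleGraph V}

def vertexBoundary (G : SimpleGraph V) (S : Set V) : Set V :=
  {w | w ∉ S ∧ ∃ v ∈ S, G.Adj v w}

def privateNeighborSet (G : SimpleGraph V) (S : Set V) (v : V) : Set V :=
  {w | G.Adj v w ∧ w ∉ S ∧ ∀ u ∈ S, G.Adj u w → u = v}

def childSet (G : SimpleGraph V) (r v : V) : Set V :=
  {w | G.Adj v w ∧ G.dist r v < G.dist r w}

lemma vertexBoundary_singleton (v : V) : G.vertexBoundary {v} = G.neighborSet v := by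
  ext w
  simpa [vertexBoundary] using fun h => h.ne'

lemma finite_vertexBoundary {S : Set V} (hS : S.Finite)
    (hfin : ∀ v ∈ S, (G.neighborSet v).Finite) : (G.vertexBoundary S).Finite :=
  (hS.biUnion hfin).subset fun _ ⟨_, _, hv, hvw⟩ => mem_biUnion hv hvw

lemma ncard_vertexBoundary_diff_singleton_add_le {S : Set V} {v : V}
    (hfin : (G.vertexBoundary S).Finite) (hv : v ∈ S) :
    (G.vertexBoundary (S \ {v})).ncard + (G.privateNeighborSet S v).ncard ≤
      (G.vertexBoundary S).ncard + 1 := by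
  have hsub : G.vertexBoundary (S \ {v}) \ {v} ∪ G.privateNeighborSet S v ⊆
      G.vertexBoundary S := by
    refine union_subset ?_ ?_
    · rintro w ⟨⟨hw, u, ⟨huS, -⟩, huw⟩, hwv⟩
      exact ⟨fun hwS => hw ⟨hwS, hwv⟩, u, huS, huw⟩
    · rintro w ⟨hvw, hwS, -⟩
      exact ⟨hwS, v, hv, hvw⟩
  have hdisj : Disjoint (G.vertexBoundary (S \ {v}) \ {v}) (G.privateNeighborSet S v) := by
    rw [disjoint_right]
    rintro w ⟨-, -, honly⟩ ⟨⟨-, u, ⟨huS, huv⟩, huw⟩, -⟩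
    exact huv (honly u huS huw)
  have hunion := ncard_le_ncard hsub hfin
  rw [ncard_union_eq hdisj (hfin.subset (subset_union_left.trans hsub))
    (hfin.subset (subset_union_right.trans hsub))] at hunion
  have := pred_ncard_le_ncard_sdiff_singleton (G.vertexBoundary (S \ {v})) v
  omega

namespace IsTree

variable (hG : G.IsTree)
include hG

lemma eq_of_adj_of_dist_lt (r : V) {v u₁ u₂ : V} (h₁ : G.Adj v u₁) (h₂ : G.Adj v u₂)
    (hd₁ : G.dist r u₁ < G.dist r v) (hd₂ : G.dist r u₂ < G.dist r v) : u₁ = u₂ := by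
  classical
  obtain ⟨p, hp, -⟩ := hG.connected.exists_path_of_dist r v
  have mem_support : ∀ u, G.Adj v u → G.dist r u < G.dist r v → u ∈ p.support := by
    intro u hu hdu
    obtain ⟨q, hq, hql⟩ := hG.connected.exists_path_of_dist r u
    refine hG.isAcyclic.mem_support_of_ne_mem_support_of_adj_of_isPath hp hq hu fun hv => ?_
    have := (dist_le (q.takeUntil v hv)).trans (q.length_takeUntil_le_length hv)
    omega
  rw [hG.isAcyclic.eq_penultimate_of_adj_end hp h₁ (mem_support u₁ h₁ hd₁),
    hG.isAcyclic.eq_penultimate_of_adj_end hp h₂ (mem_support u₂ h₂ hd₂)]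

lemma ncard_neighborSet_le_ncard_childSet_add_one (r v : V) (hfin : (G.neighborSet v).Finite) :
    (G.neighborSet v).ncard ≤ (G.childSet r v).ncard + 1 := by
  set P := {u | G.Adj v u ∧ G.dist r u < G.dist r v}
  have hP : P.ncard ≤ 1 := (ncard_le_one (hfin.subset fun _ h => h.1)).2 fun u₁ h₁ u₂ h₂ =>
    hG.eq_of_adj_of_dist_lt r h₁.1 h₂.1 h₁.2 h₂.2
  have hsplit : G.neighborSet v ⊆ G.childSet r v ∪ P := fun u hu =>
    (lt_or_gt_of_ne (hG.dist_ne_of_adj r hu)).imp (⟨hu, ·⟩) (⟨hu, ·⟩)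
  calc (G.neighborSet v).ncard ≤ (G.childSet r v ∪ P).ncard :=
        ncard_le_ncard hsplit (hfin.subset (union_subset (fun _ h => h.1) (fun _ h => h.1)))
    _ ≤ (G.childSet r v).ncard + 1 := (ncard_union_le _ _).trans (by omega)

lemma childSet_subset_privateNeighborSet {S : Set V} {r v : V}
    (hmax : ∀ u ∈ S, G.dist r u ≤ G.dist r v) : G.childSet r v ⊆ G.privateNeighborSet S v :=
  fun w ⟨hvw, hd⟩ => ⟨hvw, fun hwS => (hmax w hwS).not_gt hd, fun u hu huw =>
    hG.eq_of_adj_of_dist_lt r huw.symm hvw.symm ((hmax u hu).trans_lt hd) hd⟩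

theorem ncard_add_two_le_ncard_vertexBoundary (hdeg : ∀ v, (G.neighborSet v).ncard = 3)
    {S : Set V} (hS : S.Finite) (hne : S.Nonempty) :
    S.ncard + 2 ≤ (G.vertexBoundary S).ncard := by
  have hfin : ∀ v, (G.neighborSet v).Finite := fun v =>
    finite_of_ncard_ne_zero (by rw [hdeg v]; decide)
  induction hn : S.ncard generalizing S with
  | zero => exact absurd hn ((ncard_pos hS).2 hne).ne'
  | succ n ih =>
    obtain ⟨r, hr⟩ := hne
    obtain ⟨v, hv, hmax⟩ := S.exists_max_image (G.dist r) hS ⟨r, hr⟩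
    rcases (S \ {v}).eq_empty_or_nonempty with hSv | hSv
    · obtain rfl : S = {v} := subset_singleton_iff_eq.1 (sdiff_eq_empty.1 hSv) |>.resolve_left
        (Nonempty.ne_empty ⟨v, hv⟩)
      rw [vertexBoundary_singleton, hdeg, ← hn, ncard_singleton]
    · have hIH := ih hS.sdiff hSv (by rw [ncard_sdiff_singleton_of_mem hv, hn]; rfl)
      have hchild := hG.ncard_neighborSet_le_ncard_childSet_add_one r v (hfin v)
      have hpriv := ncard_le_ncard (hG.childSet_subset_privateNeighborSet hmax)
        ((hfin v).subset fun _ h => h.1)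
      have hremove := ncard_vertexBoundary_diff_singleton_add_le
        (finite_vertexBoundary hS fun v _ => hfin v) hv
      rw [hdeg] at hchild
      omega

end IsTree

end SimpleGraph

/-- In the 3-regular tree (connected, acyclic, every vertex of degree 3), every finite
nonempty set of vertices `S` satisfies `#∂S ≥ #S`, where `∂S` is the vertex boundary. -/
theorem stmt_0 {V : Type*} (G : SimpleGraph V)
    (hconn : G.Connected) (hacyclic : G.IsAcyclic)
    (hreg : ∀ v : V, (G.neighborSet v).ncard = 3)
    (S : Set V) (hfin : S.Finite) (hne : S.Nonempty) :
    S.ncard ≤ {w : V | w ∉ S ∧ ∃ v ∈ S, G.Adj v w}.ncard :=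
  (Nat.le_add_right _ 2).trans
    (SimpleGraph.IsTree.ncard_add_two_le_ncard_vertexBoundary ⟨hconn, hacyclic⟩ hreg hfin hne)
end

section
/- Under the assumptions of the linear score representation γ_ξ(Ψ) = λE⁰[f(M_0', Φ)], with f(m', φ) continuous in m' for P⁰-almost all φ, the optimal intensity satisfies γ_{ξ,opt} = λ·E⁰[sup_{m'∈M'} f(m', Φ)]. -/
/-!
Pointwise `f (M ω) (Φ ω) ≤ ⨆ m', f m' (Φ ω)` gives one inequality. For the other, the supremum of
the continuous function `f · (Φ ω)` equals its supremum along a dense sequence `D` of the separable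
space `M'`, so choosing the first index `n` with `f (D n) (Φ ω)` within `ε` of that countable
supremum is a measurable selection, and it is `ε`-optimal for almost every `ω`.
-/

open MeasureTheory Set

section Selection

variable {Ω : Type*} [MeasurableSpace Ω]

theorem exists_measurable_index_sub_lt_iSup {g : ℕ → Ω → ℝ} (hg : ∀ n, Measurable (g n))
    {ε : ℝ} (hε : 0 < ε) :
    ∃ N : Ω → ℕ, Measurable N ∧ ∀ ω, (⨆ n, g n ω) - ε < g (N ω) ω := by
  classical
  have hS : Measurable fun ω => ⨆ n, g n ω := Measurable.iSup hg
  -- no boundedness is needed: for an unbounded sequence `⨆` is the junk value `0`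
  have hp : ∀ ω, ∃ n, (⨆ n, g n ω) - ε < g n ω := fun ω =>
    exists_lt_of_lt_ciSup (sub_lt_self _ hε)
  exact ⟨fun ω => Nat.find (hp ω),
    measurable_find hp fun n => measurableSet_lt (hS.sub_const ε) (hg n),
    fun ω => Nat.find_spec (hp ω)⟩

variable {X : Type*} [TopologicalSpace X] [TopologicalSpace.SeparableSpace X] [Nonempty X]
  [MeasurableSpace X]

theorem exists_measurable_sub_lt_iSup {F : X → Ω → ℝ} (hF : ∀ x, Measurable (F x))
    {ε : ℝ} (hε : 0 < ε) :
    ∃ M : Ω → X, Measurable M ∧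
      ∀ ω, Continuous (fun x => F x ω) → (⨆ x, F x ω) - ε < F (M ω) ω := by
  set D := TopologicalSpace.denseSeq X
  obtain ⟨N, hN, hNε⟩ := exists_measurable_index_sub_lt_iSup (fun n => hF (D n)) hε
  refine ⟨D ∘ N, measurable_from_nat.comp hN, fun ω hc => ?_⟩
  have hsup : (⨆ n, F (D n) ω) = ⨆ x, F x ω := by
    rw [← iSup_range' (fun x => F x ω) D]
    exact (TopologicalSpace.denseRange_denseSeq X).ciSup' hc
  exact hsup ▸ hNε ω

end Selection

theorem iSup_integral_measurable_eq_integral_iSup {Ω X : Type*} [MeasurableSpace Ω]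
    {μ : Measure Ω} [IsFiniteMeasure μ] [TopologicalSpace X] [TopologicalSpace.SeparableSpace X]
    [Nonempty X] [MeasurableSpace X] {F : X → Ω → ℝ} (hF : ∀ x, Measurable (F x))
    (hcont : ∀ᵐ ω ∂μ, Continuous fun x => F x ω)
    (hbdd : ∀ᵐ ω ∂μ, BddAbove (range fun x => F x ω))
    (hint : ∀ M : Ω → X, Measurable M → Integrable (fun ω => F (M ω) ω) μ)
    (hintsup : Integrable (fun ω => ⨆ x, F x ω) μ) :
    (⨆ M : {g : Ω → X // Measurable g}, ∫ ω, F (M.1 ω) ω ∂μ) = ∫ ω, ⨆ x, F x ω ∂μ := by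
  have : Nonempty {g : Ω → X // Measurable g} :=
    ⟨⟨fun _ => Classical.arbitrary X, measurable_const⟩⟩
  have hle : ∀ M : {g : Ω → X // Measurable g}, ∫ ω, F (M.1 ω) ω ∂μ ≤ ∫ ω, ⨆ x, F x ω ∂μ :=
    fun M => integral_mono_ae (hint M.1 M.2) hintsup <| by
      filter_upwards [hbdd] with ω hb using le_ciSup hb (M.1 ω)
  refine le_antisymm (ciSup_le hle) (le_of_forall_pos_le_add fun ε hε => ?_)
  set δ := ε / (μ.real univ + 1)
  have hδ : 0 < δ := div_pos hε (by positivity)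
  have hδε : μ.real univ * δ ≤ ε := by
    rw [mul_div_assoc', div_le_iff₀ (by positivity)]
    nlinarith [measureReal_nonneg (μ := μ) (s := univ)]
  obtain ⟨M, hM, hMδ⟩ := exists_measurable_sub_lt_iSup hF hδ
  calc ∫ ω, ⨆ x, F x ω ∂μ
      ≤ ∫ ω, F (M ω) ω + δ ∂μ := by
        refine integral_mono_ae hintsup ((hint M hM).add (integrable_const δ)) ?_
        filter_upwards [hcont] with ω hc
        linarith [hMδ ω hc]
    _ = ∫ ω, F (M ω) ω ∂μ + μ.real univ * δ := by
        rw [integral_add (hint M hM) (integrable_const δ), integral_const, smul_eq_mul]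
    _ ≤ (⨆ M : {g : Ω → X // Measurable g}, ∫ ω, F (M.1 ω) ω ∂μ) + ε :=
        add_le_add (le_ciSup ⟨_, forall_mem_range.2 hle⟩ ⟨M, hM⟩) hδε

theorem stmt_5_general {M' Conf : Type*}
    [TopologicalSpace M'] [MeasurableSpace M'] [PolishSpace M'] [Nonempty M']
    [MeasurableSpace Conf]
    {Ω : Type*} [MeasurableSpace Ω] (μ : Measure Ω) [IsProbabilityMeasure μ]
    (lam : ℝ) (hlam : 0 < lam)
    (Φ : Ω → Conf) (hΦ : Measurable Φ)
    (f : M' → Conf → ℝ)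
    (hf : Measurable fun p : M' × Conf => f p.1 p.2)
    (hcont : ∀ᵐ ω ∂μ, Continuous fun m' => f m' (Φ ω))
    (hbdd : ∀ᵐ ω ∂μ, BddAbove (Set.range fun m' => f m' (Φ ω)))
    (hint : ∀ M : Ω → M', Measurable M → Integrable (fun ω => f (M ω) (Φ ω)) μ)
    (hintsup : Integrable (fun ω => ⨆ m', f m' (Φ ω)) μ) :
    (⨆ M : {g : Ω → M' // Measurable g}, lam * ∫ ω, f (M.1 ω) (Φ ω) ∂μ)
      = lam * ∫ ω, ⨆ m', f m' (Φ ω) ∂μ := by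
  rw [← iSup_integral_measurable_eq_integral_iSup (F := fun m' ω => f m' (Φ ω))
    (fun m' => hf.comp (measurable_const.prodMk hΦ)) hcont hbdd hint hintsup,
    Real.mul_iSup_of_nonneg hlam.le]

/-- Representation of the optimal intensity in the linear-score setting:
`γ_{ξ,opt} = sup over stationary markings of λ·E⁰[f(M₀', Φ)] = λ·E⁰[sup_{m'} f(m', Φ)]`,
where markings are represented by measurable mark choices `M : Ω → M'` on the Palm space
and `f(m', φ)` is continuous in `m'` almost surely. -/
theorem stmt_5 {M' Conf : Type*}
    [TopologicalSpace M'] [MeasurableSpace M'] [PolishSpace M'] [BorelSpace M'] [Nonempty M']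
    [MeasurableSpace Conf]
    {Ω : Type*} [MeasurableSpace Ω] (μ : Measure Ω) [IsProbabilityMeasure μ]
    (lam : ℝ) (hlam : 0 < lam)
    (Φ : Ω → Conf) (hΦ : Measurable Φ)
    (f : M' → Conf → ℝ)
    (hf : Measurable fun p : M' × Conf => f p.1 p.2)
    (hcont : ∀ᵐ ω ∂μ, Continuous fun m' => f m' (Φ ω))
    (hbdd : ∀ᵐ ω ∂μ, BddAbove (Set.range fun m' => f m' (Φ ω)))
    (hint : ∀ M : Ω → M', Measurable M → Integrable (fun ω => f (M ω) (Φ ω)) μ)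
    (hintsup : Integrable (fun ω => ⨆ m', f m' (Φ ω)) μ) :
    (⨆ M : {g : Ω → M' // Measurable g}, lam * ∫ ω, f (M.1 ω) (Φ ω) ∂μ)
      = lam * ∫ ω, ⨆ m', f m' (Φ ω) ∂μ :=
  stmt_5_general μ lam hlam Φ hΦ f hf hcont hbdd hint hintsup
end

section
/- In the linear-score setting, if an intensity-optimal stationary marking Ψ exists, then P⁰-almost surely f(M_0', Φ) = sup_{m'≥0} f(m', Φ); in particular argmax_{m'≥0} f(m', Φ) is nonempty P⁰-almost surely. Conversely, if argmax_{m'≥0} f(m', φ) ≠ ∅ for P⁰-almost all φ and f is continuous in m', then the factor marking M_i' := min argmax_{m'≥0} f(m', θ_{X_i}Φ) is intensity-optimal. -/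
/-!
Since `f (M ω) (Φ ω) ≤ ⨆ m', f m' (Φ ω)` pointwise, equality of the integrals forces equality
almost surely, so an optimal marking is an a.s. maximiser. Conversely, for continuous `g` the
argmax is closed, so its infimum is a maximiser; the only issue is measurability of
`ω ↦ min argmax`. For continuous `g` with a maximiser, `min argmax g ≤ t` iff the supremum of `g`
over `[0, t]` equals the global one, and by continuity both suprema can be taken over a countable
dense set, which makes that event measurable.
-/

open MeasureTheory NNReal Set

section Argmax

variable {α β : Type*}

def argmaxSet [LE β] (g : α → β) : Set α := {m | ∀ n, g n ≤ g m}

theorem isClosed_argmaxSet [TopologicalSpace α] [Preorder β] [TopologicalSpace β]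
    [OrderClosedTopology β] {g : α → β} (hg : Continuous g) : IsClosed (argmaxSet g) := by
  simp only [argmaxSet, ofPred_forall]
  exact isClosed_iInter fun n => isClosed_le continuous_const hg

theorem apply_eq_ciSup_of_mem_argmaxSet [Nonempty α] [ConditionallyCompleteLattice β]
    {g : α → β} {m : α} (hm : m ∈ argmaxSet g) : g m = ⨆ n, g n :=
  le_antisymm (le_ciSup ⟨g m, forall_mem_range.2 hm⟩ m) (ciSup_le hm)

end Argmax

/-- Junk value `0` (`= sInf ∅`) when `g` has no maximiser. -/
noncomputable def minArgmax (g : ℝ≥0 → ℝ) : ℝ≥0 := sInf (argmaxSet g)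

section MinArgmax

variable {g : ℝ≥0 → ℝ}

theorem minArgmax_mem (hg : Continuous g) (hS : (argmaxSet g).Nonempty) :
    minArgmax g ∈ argmaxSet g :=
  (isClosed_argmaxSet hg).csInf_mem hS (OrderBot.bddBelow _)

theorem apply_minArgmax (hg : Continuous g) (hS : (argmaxSet g).Nonempty) :
    g (minArgmax g) = ⨆ m, g m :=
  apply_eq_ciSup_of_mem_argmaxSet (minArgmax_mem hg hS)

theorem minArgmax_le_iff (hg : Continuous g) (hS : (argmaxSet g).Nonempty) (t : ℝ≥0) :
    minArgmax g ≤ t ↔ ⨆ m, g (min m t) = ⨆ m, g m := by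
  obtain ⟨m₀, hm₀⟩ := hS
  have hbdd : BddAbove (range g) := ⟨g m₀, forall_mem_range.2 hm₀⟩
  have hbdd_min : BddAbove (range fun m => g (min m t)) :=
    hbdd.mono (range_comp_subset_range _ g)
  have hsup_min_le : ⨆ m, g (min m t) ≤ ⨆ m, g m := ciSup_le fun m => le_ciSup hbdd _
  constructor
  · intro hle
    refine le_antisymm hsup_min_le ?_
    calc ⨆ m, g m = g (minArgmax g) := (apply_minArgmax hg ⟨m₀, hm₀⟩).symm
      _ = g (min (minArgmax g) t) := by rw [min_eq_left hle]
      _ ≤ ⨆ m, g (min m t) := le_ciSup hbdd_min _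
  · intro heq
    obtain ⟨m₁, hm₁t, hm₁⟩ := isCompact_Icc.exists_isMaxOn (nonempty_Icc.2 (zero_le : 0 ≤ t))
      hg.continuousOn
    have hm₁_mem : m₁ ∈ argmaxSet g := fun n =>
      calc g n ≤ ⨆ m, g m := le_ciSup hbdd n
        _ = ⨆ m, g (min m t) := heq.symm
        _ ≤ g m₁ := ciSup_le fun m => hm₁ ⟨zero_le, min_le_right m t⟩
    exact (csInf_le (OrderBot.bddBelow _) hm₁_mem).trans hm₁t.2

end MinArgmax

section Measurability

variable {Ω : Type*} [MeasurableSpace Ω] {F : Ω → ℝ≥0 → ℝ}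

theorem measurable_piecewise_minArgmax (hF : ∀ m, Measurable fun ω => F ω m) {G : Set Ω}
    [DecidablePred (· ∈ G)] (hG : MeasurableSet G) (hgood : ∀ ω ∈ G, Continuous (F ω) ∧ (argmaxSet (F ω)).Nonempty) :
    Measurable (G.piecewise (fun ω => minArgmax (F ω)) 0) := by
  obtain ⟨D, hDc, hD⟩ := TopologicalSpace.exists_countable_dense ℝ≥0
  have : Countable D := hDc.to_subtype
  refine measurable_of_Iic fun t => ?_
  have hpre : (fun ω => minArgmax (F ω)) ⁻¹' Iic t ∩ G =
      {ω | ⨆ q : D, F ω (min q t) = ⨆ q : D, F ω q} ∩ G := by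
    ext ω
    refine and_congr_left fun hω => ?_
    obtain ⟨hc, hS⟩ := hgood ω hω
    have hc_min : Continuous fun m => F ω (min m t) := hc.comp (continuous_id.min continuous_const)
    rw [mem_ofPred_eq, hD.ciSup' hc_min, hD.ciSup' hc]
    exact minArgmax_le_iff hc hS t
  have hmeas : MeasurableSet {ω | ⨆ q : D, F ω (min q t) = ⨆ q : D, F ω q} :=
    measurableSet_eq_fun (.iSup fun q => hF _) (.iSup fun q => hF _)
  rw [piecewise_preimage, Set.ite, hpre]
  exact (hmeas.inter hG).union ((measurable_const (a := (0 : ℝ≥0)) measurableSet_Iic).diff hG)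

theorem exists_measurable_ae_eq_minArgmax (hF : ∀ m, Measurable fun ω => F ω m) {μ : Measure Ω}
    (hgood : ∀ᵐ ω ∂μ, Continuous (F ω) ∧ (argmaxSet (F ω)).Nonempty) :
    ∃ M : Ω → ℝ≥0, Measurable M ∧ M =ᵐ[μ] fun ω => minArgmax (F ω) := by
  classical
  set B := toMeasurable μ {ω | ¬(Continuous (F ω) ∧ (argmaxSet (F ω)).Nonempty)}
  have hB : μ B = 0 := by rw [measure_toMeasurable]; exact ae_iff.1 hgood
  refine ⟨Bᶜ.piecewise (fun ω => minArgmax (F ω)) 0,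
    measurable_piecewise_minArgmax hF (measurableSet_toMeasurable _ _).compl fun ω hω => ?_, ?_⟩
  · by_contra h
    exact hω (subset_toMeasurable _ _ h)
  · filter_upwards [compl_mem_ae_iff.2 hB] with ω hω
    exact piecewise_eq_of_mem _ _ _ hω

end Measurability

theorem stmt_6_general {Conf : Type*} [MeasurableSpace Conf]
    {Ω : Type*} [MeasurableSpace Ω] (μ : Measure Ω)
    (Φ : Ω → Conf) (hΦ : Measurable Φ)
    (f : ℝ≥0 → Conf → ℝ)
    (hf : Measurable fun p : ℝ≥0 × Conf => f p.1 p.2)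
    (hcont : ∀ᵐ ω ∂μ, Continuous fun m' => f m' (Φ ω))
    (hbdd : ∀ᵐ ω ∂μ, BddAbove (Set.range fun m' => f m' (Φ ω)))
    (hint : ∀ M : Ω → ℝ≥0, Measurable M → Integrable (fun ω => f (M ω) (Φ ω)) μ)
    (hintsup : Integrable (fun ω => ⨆ m', f m' (Φ ω)) μ) :
    ((∃ M : Ω → ℝ≥0, Measurable M ∧
        ∫ ω, f (M ω) (Φ ω) ∂μ = ∫ ω, ⨆ m', f m' (Φ ω) ∂μ)
      ↔ (∀ᵐ ω ∂μ, ∃ m' : ℝ≥0, ∀ n' : ℝ≥0, f n' (Φ ω) ≤ f m' (Φ ω)))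
    ∧ (∀ M : Ω → ℝ≥0, Measurable M →
        ∫ ω, f (M ω) (Φ ω) ∂μ = ∫ ω, ⨆ m', f m' (Φ ω) ∂μ →
        ∀ᵐ ω ∂μ, f (M ω) (Φ ω) = ⨆ m', f m' (Φ ω))
    ∧ ((∀ᵐ ω ∂μ, ∃ m' : ℝ≥0, ∀ n' : ℝ≥0, f n' (Φ ω) ≤ f m' (Φ ω)) →
        ∫ ω, f (sInf {m' : ℝ≥0 | ∀ n' : ℝ≥0, f n' (Φ ω) ≤ f m' (Φ ω)}) (Φ ω) ∂μ
          = ∫ ω, ⨆ m', f m' (Φ ω) ∂μ) := by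
  have hslice (m' : ℝ≥0) : Measurable fun ω => f m' (Φ ω) :=
    hf.comp (measurable_const.prodMk hΦ)
  have optimal_ae_eq (M : Ω → ℝ≥0) (hM : Measurable M)
      (hopt : ∫ ω, f (M ω) (Φ ω) ∂μ = ∫ ω, ⨆ m', f m' (Φ ω) ∂μ) :
      ∀ᵐ ω ∂μ, f (M ω) (Φ ω) = ⨆ m', f m' (Φ ω) :=
    (integral_eq_iff_of_ae_le (hint M hM) hintsup
      (hbdd.mono fun ω hb => le_ciSup hb (M ω))).1 hopt
  have minArgmax_optimal (hex : ∀ᵐ ω ∂μ, (argmaxSet fun m' => f m' (Φ ω)).Nonempty) :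
      ∫ ω, f (minArgmax fun m' => f m' (Φ ω)) (Φ ω) ∂μ = ∫ ω, ⨆ m', f m' (Φ ω) ∂μ :=
    integral_congr_ae <| by
      filter_upwards [hcont, hex] with ω hc hS using apply_minArgmax hc hS
  refine ⟨⟨fun ⟨M, hM, hopt⟩ => ?_, fun hex => ?_⟩, optimal_ae_eq, minArgmax_optimal⟩
  · filter_upwards [optimal_ae_eq M hM hopt, hbdd] with ω heq hb
    exact ⟨M ω, fun n' => (le_ciSup hb n').trans_eq heq.symm⟩
  · obtain ⟨M, hM, hM_eq⟩ := exists_measurable_ae_eq_minArgmax hslice (hcont.and hex)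
    refine ⟨M, hM, (integral_congr_ae ?_).trans (minArgmax_optimal hex)⟩
    filter_upwards [hM_eq] with ω h
    rw [h]

/-- Existence criterion in the linear-score setting with `M' = [0,∞)`:
(a) an intensity-optimal marking (a measurable `M : Ω → ℝ≥0` with
`E⁰[f(M, Φ)] = E⁰[sup_{m'} f(m', Φ)]`) exists iff `argmax_{m'≥0} f(m', Φ)` is nonempty
`P⁰`-a.s.; (b) every intensity-optimal marking satisfies `f(M₀', Φ) = sup_{m'} f(m', Φ)`
a.s.; (c) conversely, if the argmax is a.s. nonempty then the factor marking
`M := min argmax_{m'≥0} f(m', Φ)` is intensity-optimal. -/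
theorem stmt_6 {Conf : Type*} [MeasurableSpace Conf]
    {Ω : Type*} [MeasurableSpace Ω] (μ : Measure Ω) [IsProbabilityMeasure μ]
    (Φ : Ω → Conf) (hΦ : Measurable Φ)
    (f : ℝ≥0 → Conf → ℝ)
    (hf : Measurable fun p : ℝ≥0 × Conf => f p.1 p.2)
    (hcont : ∀ᵐ ω ∂μ, Continuous fun m' => f m' (Φ ω))
    (hbdd : ∀ᵐ ω ∂μ, BddAbove (Set.range fun m' => f m' (Φ ω)))
    (hint : ∀ M : Ω → ℝ≥0, Measurable M → Integrable (fun ω => f (M ω) (Φ ω)) μ)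
    (hintsup : Integrable (fun ω => ⨆ m', f m' (Φ ω)) μ) :
    ((∃ M : Ω → ℝ≥0, Measurable M ∧
        ∫ ω, f (M ω) (Φ ω) ∂μ = ∫ ω, ⨆ m', f m' (Φ ω) ∂μ)
      ↔ (∀ᵐ ω ∂μ, ∃ m' : ℝ≥0, ∀ n' : ℝ≥0, f n' (Φ ω) ≤ f m' (Φ ω)))
    ∧ (∀ M : Ω → ℝ≥0, Measurable M →
        ∫ ω, f (M ω) (Φ ω) ∂μ = ∫ ω, ⨆ m', f m' (Φ ω) ∂μ →
        ∀ᵐ ω ∂μ, f (M ω) (Φ ω) = ⨆ m', f m' (Φ ω))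
    ∧ ((∀ᵐ ω ∂μ, ∃ m' : ℝ≥0, ∀ n' : ℝ≥0, f n' (Φ ω) ≤ f m' (Φ ω)) →
        ∫ ω, f (sInf {m' : ℝ≥0 | ∀ n' : ℝ≥0, f n' (Φ ω) ≤ f m' (Φ ω)}) (Φ ω) ∂μ
          = ∫ ω, ⨆ m', f m' (Φ ω) ∂μ) :=
  stmt_6_general μ Φ hΦ f hf hcont hbdd hint hintsup
end
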